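/- arXiv:1904.02961 — 2 statements merged into one kernel-verified Lean document; each statement's English description precedes it below -/
import Mathlib

section
/- Let a, b, z ∈ ℂ and let c, d ∈ ℂ be such that none of c, d, c + 1, d + 1 is a nonpositive integer. Then z·(b − a) · ₂F₂[a+1, b+1; c+1, d+1; z] = c·d · ( ₂F₂[a+1, b; c, d; z] − ₂F₂[a, b+1; c, d; z] ). -/
/-- The Pochhammer symbol (rising factorial): `(z)₀ = 1`, `(z)_{n+1} = (z)_n · (z + n)`. -/
noncomputable def poch (z : ℂ) : ℕ → ℂ
  | 0 => 1
  | n + 1 => poch z n * (z + (n : ℂ))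

/-- The generalized hypergeometric series `₂F₂[a₁,a₂; b₁,b₂; z]`. -/
noncomputable def F22 (a₁ a₂ b₁ b₂ z : ℂ) : ℂ :=
  ∑' n : ℕ, poch a₁ n * poch a₂ n / (poch b₁ n * poch b₂ n) * z ^ n / (Nat.factorial n : ℂ)

lemma poch_ne_zero {x : ℂ} (h : ∀ k : ℕ, x ≠ -(k : ℂ)) : ∀ n : ℕ, poch x n ≠ 0
  | 0 => one_ne_zero
  | n + 1 => by
    refine mul_ne_zero (poch_ne_zero h n) ?_
    intro h0
    exact h n (by linear_combination h0)

lemma poch_succ' (x : ℂ) (n : ℕ) : poch x (n + 1) = x * poch (x + 1) n := by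
  induction n with
  | zero => simp [poch]
  | succ n ih =>
    calc poch x (n + 1 + 1) = poch x (n + 1) * (x + ((n : ℂ) + 1)) := by
          rw [poch]; push_cast; ring
      _ = x * (poch (x + 1) n * ((x + 1) + (n : ℂ))) := by rw [ih]; ring
      _ = x * poch (x + 1) (n + 1) := by rw [poch]

lemma F22_summable (a₁ a₂ b₁ b₂ z : ℂ)
    (h₁ : ∀ k : ℕ, b₁ ≠ -(k : ℂ)) (h₂ : ∀ k : ℕ, b₂ ≠ -(k : ℂ)) :
    Summable (fun n : ℕ =>
      poch a₁ n * poch a₂ n / (poch b₁ n * poch b₂ n) * z ^ n / (Nat.factorial n : ℂ)) := by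
  set f : ℕ → ℂ := fun n =>
      poch a₁ n * poch a₂ n / (poch b₁ n * poch b₂ n) * z ^ n / (Nat.factorial n : ℂ) with hf
  apply summable_of_ratio_norm_eventually_le (r := 1/2) (by norm_num)
  set C : ℝ := 1 + ‖a₁‖ + ‖a₂‖ + 2*‖b₁‖ + 2*‖b₂‖ + 32*‖z‖ with hC
  obtain ⟨N, hN⟩ := exists_nat_ge C
  filter_upwards [Filter.eventually_ge_atTop N] with n hn
  have hCn : C ≤ (n : ℝ) := hN.trans (by exact_mod_cast hn)
  have hA1 : (0:ℝ) ≤ ‖a₁‖ := norm_nonneg _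
  have hA2 : (0:ℝ) ≤ ‖a₂‖ := norm_nonneg _
  have hB1 : (0:ℝ) ≤ ‖b₁‖ := norm_nonneg _
  have hB2 : (0:ℝ) ≤ ‖b₂‖ := norm_nonneg _
  have hZ : (0:ℝ) ≤ ‖z‖ := norm_nonneg _
  have hn1 : (1:ℝ) ≤ (n:ℝ) := by linarith
  have hnpos : (0:ℝ) < (n:ℝ) := by linarith
  -- denominators nonzero
  have pb1 : poch b₁ n ≠ 0 := poch_ne_zero h₁ n
  have pb2 : poch b₂ n ≠ 0 := poch_ne_zero h₂ n
  have hb1n : b₁ + (n:ℂ) ≠ 0 := fun h0 => h₁ n (by linear_combination h0)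
  have hb2n : b₂ + (n:ℂ) ≠ 0 := fun h0 => h₂ n (by linear_combination h0)
  have hfac : (Nat.factorial n : ℂ) ≠ 0 := Nat.cast_ne_zero.2 n.factorial_ne_zero
  have hnc1 : ((n:ℂ) + 1) ≠ 0 := Nat.cast_add_one_ne_zero n
  -- the ratio
  set q : ℂ := (a₁ + n) * (a₂ + n) * z / ((b₁ + n) * (b₂ + n) * ((n:ℂ) + 1)) with hq
  have hstep : f (n + 1) = f n * q := by
    have e1 : poch a₁ (n+1) = poch a₁ n * (a₁ + n) := rfl
    have e2 : poch a₂ (n+1) = poch a₂ n * (a₂ + n) := rfl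
    have e3 : poch b₁ (n+1) = poch b₁ n * (b₁ + n) := rfl
    have e4 : poch b₂ (n+1) = poch b₂ n * (b₂ + n) := rfl
    have e5 : (Nat.factorial (n+1) : ℂ) = ((n:ℂ)+1) * (Nat.factorial n : ℂ) := by
      rw [Nat.factorial_succ]; push_cast; ring
    simp only [hf, hq, e1, e2, e3, e4, e5]
    field_simp
    ring
  -- bound on ‖q‖
  have hnormq : ‖q‖ ≤ 1/2 := by
    have ha1n : ‖a₁ + (n:ℂ)‖ ≤ 2 * (n:ℝ) := by
      calc ‖a₁ + (n:ℂ)‖ ≤ ‖a₁‖ + ‖(n:ℂ)‖ := norm_add_le _ _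
        _ = ‖a₁‖ + (n:ℝ) := by rw [Complex.norm_natCast]
        _ ≤ 2 * (n:ℝ) := by linarith
    have ha2n : ‖a₂ + (n:ℂ)‖ ≤ 2 * (n:ℝ) := by
      calc ‖a₂ + (n:ℂ)‖ ≤ ‖a₂‖ + ‖(n:ℂ)‖ := norm_add_le _ _
        _ = ‖a₂‖ + (n:ℝ) := by rw [Complex.norm_natCast]
        _ ≤ 2 * (n:ℝ) := by linarith
    have hb1' : (n:ℝ)/2 ≤ ‖b₁ + (n:ℂ)‖ := by
      have := norm_sub_norm_le ((n:ℂ)) (-b₁)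
      rw [sub_neg_eq_add, norm_neg, Complex.norm_natCast] at this
      have h' : ‖(n:ℂ) + b₁‖ = ‖b₁ + (n:ℂ)‖ := by rw [add_comm]
      rw [h'] at this
      linarith
    have hb2' : (n:ℝ)/2 ≤ ‖b₂ + (n:ℂ)‖ := by
      have := norm_sub_norm_le ((n:ℂ)) (-b₂)
      rw [sub_neg_eq_add, norm_neg, Complex.norm_natCast] at this
      have h' : ‖(n:ℂ) + b₂‖ = ‖b₂ + (n:ℂ)‖ := by rw [add_comm]
      rw [h'] at this
      linarith
    have hnc1' : ‖(n:ℂ) + 1‖ = (n:ℝ) + 1 := by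
      have : ((n:ℂ) + 1) = ((n + 1 : ℕ) : ℂ) := by push_cast; ring
      rw [this, Complex.norm_natCast]; push_cast; ring
    rw [hq, norm_div, norm_mul, norm_mul, norm_mul, norm_mul, hnc1']
    have hbpos : (0:ℝ) < (n:ℝ)/2 := by linarith
    calc ‖a₁ + (n:ℂ)‖ * ‖a₂ + (n:ℂ)‖ * ‖z‖ / (‖b₁ + (n:ℂ)‖ * ‖b₂ + (n:ℂ)‖ * ((n:ℝ) + 1))
        ≤ (2*(n:ℝ)) * (2*(n:ℝ)) * ‖z‖ / (((n:ℝ)/2) * ((n:ℝ)/2) * ((n:ℝ) + 1)) := by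
          gcongr
      _ = 16 * ‖z‖ / ((n:ℝ) + 1) := by field_simp; ring
      _ ≤ 1/2 := by
          rw [div_le_iff₀ (by linarith)]
          linarith
  rw [hstep, norm_mul]
  calc ‖f n‖ * ‖q‖ ≤ ‖f n‖ * (1/2) := by
        exact mul_le_mul_of_nonneg_left hnormq (norm_nonneg _)
    _ = 1/2 * ‖f n‖ := by ring

lemma key_identity (a b z c d : ℂ) (n : ℕ) (hc0 : c ≠ 0) (hd0 : d ≠ 0)
    (hpc : poch (c+1) n ≠ 0) (hpd : poch (d+1) n ≠ 0) :
    z * (b - a) *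
        (poch (a+1) n * poch (b+1) n / (poch (c+1) n * poch (d+1) n) * z ^ n /
          (Nat.factorial n : ℂ)) =
      c * d *
        (poch (a+1) (n+1) * poch b (n+1) / (poch c (n+1) * poch d (n+1)) * z ^ (n+1) /
            (Nat.factorial (n+1) : ℂ) -
          poch a (n+1) * poch (b+1) (n+1) / (poch c (n+1) * poch d (n+1)) * z ^ (n+1) /
            (Nat.factorial (n+1) : ℂ)) := by
  have h1 : poch (a+1) (n+1) = poch (a+1) n * (a + 1 + (n:ℂ)) := rfl
  have h4 : poch (b+1) (n+1) = poch (b+1) n * (b + 1 + (n:ℂ)) := rfl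
  have h2 : poch b (n+1) = b * poch (b+1) n := poch_succ' b n
  have h3 : poch a (n+1) = a * poch (a+1) n := poch_succ' a n
  have h5 : poch c (n+1) = c * poch (c+1) n := poch_succ' c n
  have h6 : poch d (n+1) = d * poch (d+1) n := poch_succ' d n
  have h7 : (Nat.factorial (n+1) : ℂ) = ((n:ℂ)+1) * (Nat.factorial n : ℂ) := by
    rw [Nat.factorial_succ]; push_cast; ring
  have hfac : (Nat.factorial n : ℂ) ≠ 0 := Nat.cast_ne_zero.2 n.factorial_ne_zero
  have hn1 : ((n:ℂ) + 1) ≠ 0 := Nat.cast_add_one_ne_zero n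
  rw [h1, h2, h3, h4, h5, h6, h7]
  field_simp
  ring

/-- A contiguous relation of the `₂F₂` function:
`z(b−a)·₂F₂[a+1,b+1; c+1,d+1; z] = cd·(₂F₂[a+1,b; c,d; z] − ₂F₂[a,b+1; c,d; z])`,
provided none of `c, d, c+1, d+1` is a nonpositive integer. -/
theorem two_F_two_contiguous_relation
    (a b z c d : ℂ)
    (hc : ∀ k : ℕ, c ≠ -(k : ℂ)) (hd : ∀ k : ℕ, d ≠ -(k : ℂ))
    (hc1 : ∀ k : ℕ, c + 1 ≠ -(k : ℂ)) (hd1 : ∀ k : ℕ, d + 1 ≠ -(k : ℂ)) :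
    z * (b - a) * F22 (a + 1) (b + 1) (c + 1) (d + 1) z =
      c * d * (F22 (a + 1) b c d z - F22 a (b + 1) c d z) := by
  have hc0 : c ≠ 0 := by simpa using hc 0
  have hd0 : d ≠ 0 := by simpa using hd 0
  have hS1 : Summable (fun n : ℕ =>
      poch (a+1) n * poch b n / (poch c n * poch d n) * z ^ n / (Nat.factorial n : ℂ)) :=
    F22_summable _ _ _ _ _ hc hd
  have hS2 : Summable (fun n : ℕ =>
      poch a n * poch (b+1) n / (poch c n * poch d n) * z ^ n / (Nat.factorial n : ℂ)) :=
    F22_summable _ _ _ _ _ hc hd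
  unfold F22
  rw [← Summable.tsum_sub hS1 hS2, ← tsum_mul_left, ← tsum_mul_left]
  have hRsum : Summable (fun n : ℕ => c * d *
      (poch (a+1) n * poch b n / (poch c n * poch d n) * z ^ n / (Nat.factorial n : ℂ) -
        poch a n * poch (b+1) n / (poch c n * poch d n) * z ^ n / (Nat.factorial n : ℂ))) :=
    (hS1.sub hS2).mul_left _
  rw [Summable.tsum_eq_zero_add hRsum]
  have h0 : c * d *
      (poch (a+1) 0 * poch b 0 / (poch c 0 * poch d 0) * z ^ 0 / (Nat.factorial 0 : ℂ) -
        poch a 0 * poch (b+1) 0 / (poch c 0 * poch d 0) * z ^ 0 / (Nat.factorial 0 : ℂ)) = 0 := by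
    simp [poch]
  rw [h0, zero_add]
  exact tsum_congr fun n =>
    key_identity a b z c d n hc0 hd0 (poch_ne_zero hc1 n) (poch_ne_zero hd1 n)
end

section
/- Let ξ ∈ ℂ with ξ ≠ 1 and such that 1 + ξ is not a nonpositive integer, and let z ∈ ℂ with z ≠ 0. Then ₂F₂[1, 1/2 + ξ/2; 2 + ξ, 2; z] = (2/z) · ((ξ + 1)/(ξ − 1)) · ( ₁F₁[−1/2 + ξ/2; 1 + ξ; z] − 1 ). -/
/-- The confluent hypergeometric (Kummer) series `₁F₁[a; b; z]`. -/
noncomputable def F11 (a b z : ℂ) : ℂ :=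
  ∑' n : ℕ, poch a n / poch b n * z ^ n / (Nat.factorial n : ℂ)

/-!
Shifting the Kummer series by one index, `(a)_{n+1} = a (a+1)_n` and `(n+1)! = (2)_n` turn the
`n+1`-st term of `₁F₁[a; b; z]` into `(a/b) z` times the `n`-th term of `₂F₂[1, a+1; b+1, 2; z]`
(the factor `(1)_n = n!` cancels the `n!` of the `₂F₂` series). Hence
`₁F₁[a; b; z] = 1 + (a/b) z ₂F₂[1, a+1; b+1, 2; z]`, and with `a = (ξ-1)/2`, `b = 1 + ξ` this is
the theorem solved for `₂F₂`. Termwise manipulation is legitimate because the Kummer series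
converges everywhere by the ratio test.
-/

open Filter Topology Nat

lemma poch_one (n : ℕ) : poch 1 n = n ! := by
  induction n with
  | zero => simp [poch]
  | succ n ih => simp [poch, ih, factorial_succ]; ring

lemma poch_two (n : ℕ) : poch 2 n = (n + 1)! := by
  induction n with
  | zero => simp [poch]
  | succ n ih => simp [poch, ih, factorial_succ]; ring

lemma poch_succ_eq_mul_poch_add_one (a : ℂ) (n : ℕ) : poch a (n + 1) = a * poch (a + 1) n := by
  induction n with
  | zero => simp [poch]
  | succ n ih => rw [poch, ih, poch]; push_cast; ring

lemma summable_of_succ_eq_mul_of_tendsto_zero {f ρ : ℕ → ℂ} (hf : ∀ n, f (n + 1) = f n * ρ n)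
    (hρ : Tendsto ρ atTop (𝓝 0)) : Summable f := by
  have hsmall : ∀ᶠ n in atTop, ‖ρ n‖ ≤ 1 / 2 :=
    (tendsto_zero_iff_norm_tendsto_zero.mp hρ).eventually (ge_mem_nhds (by norm_num))
  refine summable_of_ratio_norm_eventually_le (r := 1 / 2) (by norm_num) ?_
  filter_upwards [hsmall] with n hn
  rw [hf, norm_mul, mul_comm]
  exact mul_le_mul_of_nonneg_right hn (norm_nonneg _)

lemma kummer_term_succ (a b z : ℂ) (n : ℕ) :
    poch a (n + 1) / poch b (n + 1) * z ^ (n + 1) / (n + 1)! =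
      poch a n / poch b n * z ^ n / n ! * ((a + n) * z / ((b + n) * (n + 1))) := by
  simp only [poch, pow_succ, factorial_succ]
  push_cast
  simp only [div_eq_mul_inv, mul_inv]
  ring

lemma kummer_ratio_tendsto_zero (a b z : ℂ) :
    Tendsto (fun n : ℕ => (a + n) * z / ((b + n) * (n + 1))) atTop (𝓝 0) := by
  have hfrac : Tendsto (fun n : ℕ => (a + n) / (b + n)) atTop (𝓝 1) := by
    simpa using tendsto_add_mul_div_add_mul_atTop_nhds a b (1 : ℂ) one_ne_zero
  have hinv : Tendsto (fun n : ℕ => 1 / (1 + (n : ℂ))) atTop (𝓝 0) := by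
    simpa using tendsto_add_mul_div_add_mul_atTop_nhds (1 : ℂ) 1 0 one_ne_zero
  have := (hfrac.mul hinv).mul_const z
  rw [mul_zero, zero_mul] at this
  refine this.congr fun n => ?_
  simp only [div_eq_mul_inv, mul_inv]
  ring

lemma summable_kummer (a b z : ℂ) :
    Summable fun n : ℕ => poch a n / poch b n * z ^ n / n ! :=
  summable_of_succ_eq_mul_of_tendsto_zero (kummer_term_succ a b z) (kummer_ratio_tendsto_zero a b z)

-- A pure field identity, so it survives `(b)_n = 0` through the junk value `x / 0 = 0`.
lemma kummer_term_succ_eq_F22_term (a b z : ℂ) (n : ℕ) :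
    poch a (n + 1) / poch b (n + 1) * z ^ (n + 1) / (n + 1)! =
      a / b * z * (poch 1 n * poch (a + 1) n / (poch (b + 1) n * poch 2 n) * z ^ n / n !) := by
  have hn : (n ! : ℂ) ≠ 0 := by exact_mod_cast n.factorial_ne_zero
  rw [poch_succ_eq_mul_poch_add_one a, poch_succ_eq_mul_poch_add_one b, poch_one, poch_two]
  field_simp
  ring

lemma F11_eq_one_add_mul_F22 (a b z : ℂ) :
    F11 a b z = 1 + a / b * z * F22 1 (a + 1) (b + 1) 2 z := by
  rw [F11, (summable_kummer a b z).tsum_eq_zero_add]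
  simp only [kummer_term_succ_eq_F22_term, tsum_mul_left, F22]
  simp [poch]

/-- `₂F₂[1, 1/2+ξ/2; 2+ξ, 2; z] = (2/z)·((ξ+1)/(ξ−1))·(₁F₁[−1/2+ξ/2; 1+ξ; z] − 1)`, for
`ξ ≠ 1` with `1 + ξ` not a nonpositive integer, and `z ≠ 0`. -/
theorem two_F_two_reduces_to_Kummer
    (ξ z : ℂ) (hξ : ξ ≠ 1) (hb : ∀ k : ℕ, 1 + ξ ≠ -(k : ℂ)) (hz : z ≠ 0) :
    F22 1 (1/2 + ξ/2) (2 + ξ) 2 z =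
      (2 / z) * ((ξ + 1) / (ξ - 1)) * (F11 (-1/2 + ξ/2) (1 + ξ) z - 1) := by
  have hξ1 : ξ - 1 ≠ 0 := sub_ne_zero.2 hξ
  have hξ2 : 1 + ξ ≠ 0 := by simpa using hb 0
  have hshift := F11_eq_one_add_mul_F22 (-1/2 + ξ/2) (1 + ξ) z
  rw [show -1/2 + ξ/2 + 1 = 1/2 + ξ/2 by ring, show 1 + ξ + 1 = 2 + ξ by ring] at hshift
  rw [hshift]
  field_simp
  ring
end
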